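/- arXiv:2603.17289 — 9 statements merged into one kernel-verified Lean document; each statement's English description precedes it below -/
import Mathlib

section
/- Let g be a finite-dimensional real Lie algebra. For a smooth function f : g* → ℝ and ξ ∈ g*, let d_ξ f ∈ g denote the element of g corresponding to the Fréchet derivative Df(ξ) ∈ (g*)* under the canonical isomorphism g ≅ (g*)*. Define the Lie–Poisson bracket {f,g}(ξ) := ξ([d_ξ f, d_ξ g]). Then for all smooth f, g, h : g* → ℝ and all ξ ∈ g* the Jacobi identity holds: {f,{g,h}}(ξ) + {h,{f,g}}(ξ) + {g,{h,f}}(ξ) = 0. -/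
/-- The Lie–Poisson bracket on functions on the dual `g* = g →L[ℝ] ℝ` of a
finite-dimensional real Lie algebra `g` (with Lie bracket given by the bilinear map
`brkt`): `{f,g}(ξ) = ξ ⁅d_ξ f, d_ξ g⁆`, where `d` assigns to a function and a point
the element of `g` corresponding to its Fréchet derivative. -/
noncomputable def liePoissonBracket {L : Type*} [NormedAddCommGroup L] [NormedSpace ℝ L]
    (brkt : L →ₗ[ℝ] L →ₗ[ℝ] L)
    (d : ((L →L[ℝ] ℝ) → ℝ) → (L →L[ℝ] ℝ) → L)
    (f g : (L →L[ℝ] ℝ) → ℝ) : (L →L[ℝ] ℝ) → ℝ :=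
  fun ξ => ξ (brkt (d f ξ) (d g ξ))

section Aux

variable {L : Type*} [NormedAddCommGroup L] [NormedSpace ℝ L] [FiniteDimensional ℝ L]

/-- The canonical realization of the derivative of `g : L* → ℝ` at `ξ` as an element
of `L`, constructed via a basis. -/
noncomputable def uAux (g : (L →L[ℝ] ℝ) → ℝ) (ξ : L →L[ℝ] ℝ) : L :=
  ∑ i, fderiv ℝ g ξ (LinearMap.toContinuousLinearMap ((Module.finBasis ℝ L).coord i)) •
    Module.finBasis ℝ L i

lemma uAux_pair (g : (L →L[ℝ] ℝ) → ℝ) (ξ α : L →L[ℝ] ℝ) :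
    α (uAux g ξ) = fderiv ℝ g ξ α := by
  classical
  set b := Module.finBasis ℝ L with hb
  have hα : α = ∑ i, α (b i) • LinearMap.toContinuousLinearMap (b.coord i) := by
    ext x
    simp only [ContinuousLinearMap.sum_apply, ContinuousLinearMap.smul_apply,
      LinearMap.coe_toContinuousLinearMap', Module.Basis.coord_apply, smul_eq_mul]
    conv_lhs => rw [← b.sum_repr x]
    simp [mul_comm, -Module.Basis.sum_repr]
  conv_rhs => rw [hα]
  simp [uAux, mul_comm, hb]

lemma uAux_contDiff {g : (L →L[ℝ] ℝ) → ℝ} (hg : ContDiff ℝ (⊤ : ℕ∞) g) :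
    ContDiff ℝ (⊤ : ℕ∞) (uAux g) := by
  have hfd : ContDiff ℝ (⊤ : ℕ∞) (fderiv ℝ g) := hg.fderiv_right (by exact_mod_cast le_top)
  refine ContDiff.sum fun i _ => ContDiff.smul ?_ contDiff_const
  have happ : ContDiff ℝ (⊤ : ℕ∞) (fun ζ : (L →L[ℝ] ℝ) →L[ℝ] ℝ =>
      ζ (LinearMap.toContinuousLinearMap ((Module.finBasis ℝ L).coord i))) :=
    contDiff_id.clm_apply contDiff_const
  exact happ.comp hfd

/-- The bracket as a continuous bilinear map. -/
noncomputable def Bc (brkt : L →ₗ[ℝ] L →ₗ[ℝ] L) : L →L[ℝ] L →L[ℝ] L :=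
  LinearMap.toContinuousLinearMap
    { toFun := fun x => LinearMap.toContinuousLinearMap (brkt x)
      map_add' := fun x y => by ext z; simp
      map_smul' := fun c x => by ext z; simp }

@[simp] lemma Bc_apply (brkt : L →ₗ[ℝ] L →ₗ[ℝ] L) (x y : L) :
    Bc brkt x y = brkt x y := by
  simp [Bc]

lemma lp_fderiv_apply (brkt : L →ₗ[ℝ] L →ₗ[ℝ] L) {g h : (L →L[ℝ] ℝ) → ℝ}
    (hg : ContDiff ℝ (⊤ : ℕ∞) g) (hh : ContDiff ℝ (⊤ : ℕ∞) h) (ξ γ : L →L[ℝ] ℝ) :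
    fderiv ℝ (fun ζ => ζ (Bc brkt (uAux g ζ) (uAux h ζ))) ξ γ
      = γ (Bc brkt (uAux g ξ) (uAux h ξ))
        + ξ (Bc brkt (fderiv ℝ (uAux g) ξ γ) (uAux h ξ))
        + ξ (Bc brkt (uAux g ξ) (fderiv ℝ (uAux h) ξ γ)) := by
  have dug : DifferentiableAt ℝ (uAux g) ξ := ((uAux_contDiff hg).differentiable (by simp)) ξ
  have duh : DifferentiableAt ℝ (uAux h) ξ := ((uAux_contDiff hh).differentiable (by simp)) ξ
  have hc : HasFDerivAt (fun ζ => Bc brkt (uAux g ζ))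
      ((Bc brkt).comp (fderiv ℝ (uAux g) ξ)) ξ :=
    (Bc brkt).hasFDerivAt.comp ξ dug.hasFDerivAt
  have hv : HasFDerivAt (fun ζ => Bc brkt (uAux g ζ) (uAux h ζ))
      ((Bc brkt (uAux g ξ)).comp (fderiv ℝ (uAux h) ξ)
        + ((Bc brkt).comp (fderiv ℝ (uAux g) ξ)).flip (uAux h ξ)) ξ :=
    hc.clm_apply duh.hasFDerivAt
  have hW : HasFDerivAt (fun ζ => ζ (Bc brkt (uAux g ζ) (uAux h ζ)))
      ((ξ : L →L[ℝ] ℝ).comp ((Bc brkt (uAux g ξ)).comp (fderiv ℝ (uAux h) ξ)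
          + ((Bc brkt).comp (fderiv ℝ (uAux g) ξ)).flip (uAux h ξ))
        + (ContinuousLinearMap.id ℝ (L →L[ℝ] ℝ)).flip (Bc brkt (uAux g ξ) (uAux h ξ))) ξ := by
    exact (hasFDerivAt_id ξ).clm_apply hv
  rw [hW.fderiv]
  simp only [ContinuousLinearMap.add_apply, ContinuousLinearMap.coe_comp', Function.comp_apply,
    ContinuousLinearMap.flip_apply, ContinuousLinearMap.comp_apply,
    ContinuousLinearMap.id_apply, map_add]
  ring

lemma uAux_symm {g : (L →L[ℝ] ℝ) → ℝ} (hg : ContDiff ℝ (⊤ : ℕ∞) g) (ξ β γ : L →L[ℝ] ℝ) :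
    γ (fderiv ℝ (uAux g) ξ β) = β (fderiv ℝ (uAux g) ξ γ) := by
  have hdg : Differentiable ℝ g := hg.differentiable (by simp)
  have hfd' : ContDiff ℝ (⊤ : ℕ∞) (fderiv ℝ g) := hg.fderiv_right (by exact_mod_cast le_top)
  have hfd : Differentiable ℝ (fderiv ℝ g) := hfd'.differentiable (by simp)
  have key : ∀ α δ' : L →L[ℝ] ℝ,
      α (fderiv ℝ (uAux g) ξ δ') = fderiv ℝ (fderiv ℝ g) ξ δ' α := by
    intro α δ'
    have hA : HasFDerivAt (uAux g) (fderiv ℝ (uAux g) ξ) ξ :=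
      (((uAux_contDiff hg).differentiable (by simp)) ξ).hasFDerivAt
    have hcomp : HasFDerivAt (fun ζ => α (uAux g ζ))
        (α.comp (fderiv ℝ (uAux g) ξ)) ξ := α.hasFDerivAt.comp ξ hA
    have heq : (fun ζ => α (uAux g ζ)) = fun ζ => fderiv ℝ g ζ α :=
      funext fun ζ => uAux_pair g ζ α
    rw [heq] at hcomp
    have hcomp2 := (hfd ξ).hasFDerivAt.clm_apply (hasFDerivAt_const α ξ)
    have huniq := hcomp.unique hcomp2
    have := congrArg (fun (T : (L →L[ℝ] ℝ) →L[ℝ] ℝ) => T δ') huniq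
    simpa using this
  rw [key γ β, key β γ]
  exact second_derivative_symmetric (fun y => (hdg y).hasFDerivAt) (hfd ξ).hasFDerivAt β γ

end Aux

/-- The Lie–Poisson bracket on the dual of a finite-dimensional real Lie algebra
satisfies the Jacobi identity on smooth functions. -/
theorem liePoisson_jacobi {L : Type*} [NormedAddCommGroup L] [NormedSpace ℝ L]
    [FiniteDimensional ℝ L]
    -- the Lie algebra structure on `L`:
    (brkt : L →ₗ[ℝ] L →ₗ[ℝ] L)
    (hbrkt_alt : ∀ u : L, brkt u u = 0)
    (hbrkt_jacobi : ∀ u v w : L,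
      brkt u (brkt v w) + brkt w (brkt u v) + brkt v (brkt w u) = 0)
    -- the identification of the Fréchet derivative at `ξ ∈ g*` with an element of `g`,
    -- via the canonical isomorphism `g ≅ (g*)*`:
    (d : ((L →L[ℝ] ℝ) → ℝ) → (L →L[ℝ] ℝ) → L)
    (hd : ∀ (f : (L →L[ℝ] ℝ) → ℝ) (ξ α : L →L[ℝ] ℝ), α (d f ξ) = fderiv ℝ f ξ α)
    (f g h : (L →L[ℝ] ℝ) → ℝ)
    (hf : ContDiff ℝ (⊤ : ℕ∞) f) (hg : ContDiff ℝ (⊤ : ℕ∞) g) (hh : ContDiff ℝ (⊤ : ℕ∞) h)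
    (ξ : L →L[ℝ] ℝ) :
    liePoissonBracket brkt d f (liePoissonBracket brkt d g h) ξ
      + liePoissonBracket brkt d h (liePoissonBracket brkt d f g) ξ
      + liePoissonBracket brkt d g (liePoissonBracket brkt d h f) ξ = 0 := by
  classical
  set b := Module.finBasis ℝ L with hbdef
  -- `d` agrees with `uAux`
  have hdu : ∀ (p : (L →L[ℝ] ℝ) → ℝ) (ζ : L →L[ℝ] ℝ), d p ζ = uAux p ζ := by
    intro p ζ
    refine b.ext_elem fun i => ?_
    have h1 := hd p ζ (LinearMap.toContinuousLinearMap (b.coord i))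
    have h2 := uAux_pair p ζ (LinearMap.toContinuousLinearMap (b.coord i))
    simp only [LinearMap.coe_toContinuousLinearMap', Module.Basis.coord_apply] at h1 h2
    rw [h1, h2]
  -- antisymmetry of the bracket
  have hanti : ∀ x y : L, brkt x y = - brkt y x := by
    intro x y
    have h0 := hbrkt_alt (x + y)
    simp only [map_add, LinearMap.add_apply, hbrkt_alt, zero_add, add_zero] at h0
    exact eq_neg_of_add_eq_zero_right h0
  -- pairing with `ξ ∘ brkt a`
  have hγ : ∀ (a : L) (x : L), (ξ.comp (Bc brkt a)) x = ξ (brkt a x) := by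
    intro a x; simp
  -- the master formula for an iterated bracket
  have main : ∀ (p q r : (L →L[ℝ] ℝ) → ℝ), ContDiff ℝ (⊤ : ℕ∞) q → ContDiff ℝ (⊤ : ℕ∞) r →
      liePoissonBracket brkt d p (liePoissonBracket brkt d q r) ξ
        = ξ (brkt (uAux p ξ) (brkt (uAux q ξ) (uAux r ξ)))
          + ξ (brkt (fderiv ℝ (uAux q) ξ (ξ.comp (Bc brkt (uAux p ξ)))) (uAux r ξ))
          + ξ (brkt (uAux q ξ) (fderiv ℝ (uAux r) ξ (ξ.comp (Bc brkt (uAux p ξ))))) := by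
    intro p q r hq hr
    have hP : liePoissonBracket brkt d q r
        = fun ζ => ζ (Bc brkt (uAux q ζ) (uAux r ζ)) := by
      funext ζ
      rw [liePoissonBracket, hdu, hdu, Bc_apply]
    calc liePoissonBracket brkt d p (liePoissonBracket brkt d q r) ξ
        = ξ (brkt (d p ξ) (d (liePoissonBracket brkt d q r) ξ)) := rfl
      _ = (ξ.comp (Bc brkt (uAux p ξ))) (uAux (liePoissonBracket brkt d q r) ξ) := by
          rw [hdu, hdu, hγ]
      _ = fderiv ℝ (liePoissonBracket brkt d q r) ξ (ξ.comp (Bc brkt (uAux p ξ))) :=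
          uAux_pair _ _ _
      _ = _ := by
          rw [hP, lp_fderiv_apply brkt hq hr ξ _]
          simp only [hγ, Bc_apply]
  rw [main f g h hg hh, main h f g hf hg, main g h f hh hf]
  set uf := uAux f ξ
  set ug := uAux g ξ
  set uh := uAux h ξ
  set γf := ξ.comp (Bc brkt uf) with hγf
  set γg := ξ.comp (Bc brkt ug) with hγg
  set γh := ξ.comp (Bc brkt uh) with hγh
  set Af := fderiv ℝ (uAux f) ξ
  set Ag := fderiv ℝ (uAux g) ξ
  set Ah := fderiv ℝ (uAux h) ξ
  -- the Jacobi terms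
  have j : ξ (brkt uf (brkt ug uh)) + ξ (brkt uh (brkt uf ug)) + ξ (brkt ug (brkt uh uf)) = 0 := by
    rw [← map_add, ← map_add, hbrkt_jacobi, map_zero]
  -- the second-order terms cancel pairwise
  have e1 : ξ (brkt (Ag γf) uh) = - γh (Ag γf) := by rw [hanti, map_neg, hγ]
  have e2 : ξ (brkt uf (Ag γh)) = γh (Ag γf) := by
    rw [← hγ, ← hγf, uAux_symm hg ξ γh γf]
  have e3 : ξ (brkt ug (Ah γf)) = γg (Ah γf) := (hγ _ _).symm
  have e4 : ξ (brkt (Ah γg) uf) = - γg (Ah γf) := by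
    rw [hanti, map_neg, ← hγ, ← hγf, uAux_symm hh ξ γg γf]
  have e5 : ξ (brkt (Af γh) ug) = - γg (Af γh) := by rw [hanti, map_neg, hγ]
  have e6 : ξ (brkt uh (Af γg)) = γg (Af γh) := by
    rw [← hγ, ← hγh, uAux_symm hf ξ γg γh]
  linarith [j, e1, e2, e3, e4, e5, e6]
end

section
/- Let g and h be finite-dimensional real Lie algebras and T : g → h a linear map, with dual map T* : h* → g*. Then T is a Lie algebra homomorphism (T[u,v] = [Tu,Tv] for all u,v ∈ g) if and only if T* is a Poisson map with respect to the Lie–Poisson brackets, i.e. for all smooth f, g : g* → ℝ and all η ∈ h*: {f,g}_{g*}(T*(η)) = {f ∘ T*, g ∘ T*}_{h*}(η). -/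
/-!
Differentiating `f ∘ T*` by the chain rule gives `d_η (f ∘ T*) = T (d_{T*η} f)`, so
`{f ∘ T*, g ∘ T*}(η) = η ⁅T d f, T d g⁆` while `{f, g}(T*η) = η (T ⁅d f, d g⁆)`: the two agree
when `T` preserves brackets. Conversely, the linear functions `ξ ↦ ξ u` have constant
differential `u`, and testing the Poisson property on them gives `η (T ⁅u, v⁆) = η ⁅T u, T v⁆`
for every `η`, hence `T ⁅u, v⁆ = ⁅T u, T v⁆` by Hahn–Banach.
-/

def IsDualGradient {E : Type*} [NormedAddCommGroup E] [NormedSpace ℝ E]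
    (d : ((E →L[ℝ] ℝ) → ℝ) → (E →L[ℝ] ℝ) → E) : Prop :=
  ∀ (f : (E →L[ℝ] ℝ) → ℝ) (ξ α : E →L[ℝ] ℝ), α (d f ξ) = fderiv ℝ f ξ α

namespace IsDualGradient

variable {E F : Type*} [NormedAddCommGroup E] [NormedSpace ℝ E]
  [NormedAddCommGroup F] [NormedSpace ℝ F]
  {dE : ((E →L[ℝ] ℝ) → ℝ) → (E →L[ℝ] ℝ) → E} {dF : ((F →L[ℝ] ℝ) → ℝ) → (F →L[ℝ] ℝ) → F}

theorem apply_eval (hd : IsDualGradient dE) (u : E) (ξ : E →L[ℝ] ℝ) :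
    dE (fun ξ => ξ u) ξ = u :=
  SeparatingDual.eq_iff_forall_dual_eq.2 fun α => by
    rw [hd, show (fun ξ : E →L[ℝ] ℝ => ξ u) = ContinuousLinearMap.apply ℝ ℝ u from rfl,
      ContinuousLinearMap.fderiv, ContinuousLinearMap.apply_apply]

theorem comp_dualMap (hdE : IsDualGradient dE) (hdF : IsDualGradient dF) (T : E →L[ℝ] F)
    {f : (E →L[ℝ] ℝ) → ℝ} {η : F →L[ℝ] ℝ} (hf : DifferentiableAt ℝ f (η.comp T)) :
    dF (fun ζ => f (ζ.comp T)) η = T (dE f (η.comp T)) :=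
  SeparatingDual.eq_iff_forall_dual_eq.2 fun α => by
    have hchain : fderiv ℝ (f ∘ ContinuousLinearMap.precomp ℝ T) η
        = (fderiv ℝ f (η.comp T)).comp (ContinuousLinearMap.precomp ℝ T) := by
      rw [fderiv_comp η hf (ContinuousLinearMap.precomp ℝ T).differentiableAt,
        ContinuousLinearMap.fderiv]
      rfl
    rw [hdF, show (fun ζ : F →L[ℝ] ℝ => f (ζ.comp T)) = f ∘ ContinuousLinearMap.precomp ℝ T
      from rfl, hchain]
    exact (hdE f (η.comp T) (α.comp T)).symm

theorem liePoissonBracket_comp_dualMap (hdE : IsDualGradient dE) (hdF : IsDualGradient dF)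
    (brF : F →ₗ[ℝ] F →ₗ[ℝ] F) (T : E →L[ℝ] F)
    {f g : (E →L[ℝ] ℝ) → ℝ} {η : F →L[ℝ] ℝ} (hf : DifferentiableAt ℝ f (η.comp T))
    (hg : DifferentiableAt ℝ g (η.comp T)) :
    liePoissonBracket brF dF (fun ζ => f (ζ.comp T)) (fun ζ => g (ζ.comp T)) η
      = η (brF (T (dE f (η.comp T))) (T (dE g (η.comp T)))) := by
  rw [liePoissonBracket, comp_dualMap hdE hdF T hf, comp_dualMap hdE hdF T hg]

end IsDualGradient

open IsDualGradient in
theorem lieHom_iff_dual_poissonMap_general {L M : Type*}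
    [NormedAddCommGroup L] [NormedSpace ℝ L] [FiniteDimensional ℝ L]
    [NormedAddCommGroup M] [NormedSpace ℝ M]
    -- the Lie algebra structure on `L`:
    (brL : L →ₗ[ℝ] L →ₗ[ℝ] L)
    -- the Lie algebra structure on `M`:
    (brM : M →ₗ[ℝ] M →ₗ[ℝ] M)
    -- the identifications of Fréchet derivatives with Lie algebra elements via the
    -- canonical isomorphisms `g ≅ (g*)*` and `h ≅ (h*)*`:
    (dL : ((L →L[ℝ] ℝ) → ℝ) → (L →L[ℝ] ℝ) → L)
    (hdL : ∀ (f : (L →L[ℝ] ℝ) → ℝ) (ξ α : L →L[ℝ] ℝ), α (dL f ξ) = fderiv ℝ f ξ α)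
    (dM : ((M →L[ℝ] ℝ) → ℝ) → (M →L[ℝ] ℝ) → M)
    (hdM : ∀ (f : (M →L[ℝ] ℝ) → ℝ) (η α : M →L[ℝ] ℝ), α (dM f η) = fderiv ℝ f η α)
    -- a linear map `T : L → M`:
    (T : L →ₗ[ℝ] M) :
    (∀ u v : L, T (brL u v) = brM (T u) (T v))
      ↔ (∀ f g : (L →L[ℝ] ℝ) → ℝ, ContDiff ℝ (⊤ : ℕ∞) f → ContDiff ℝ (⊤ : ℕ∞) g →
          ∀ η : M →L[ℝ] ℝ,
            liePoissonBracket brL dL f g (η.comp (LinearMap.toContinuousLinearMap T))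
              = liePoissonBracket brM dM
                  (fun ζ => f (ζ.comp (LinearMap.toContinuousLinearMap T)))
                  (fun ζ => g (ζ.comp (LinearMap.toContinuousLinearMap T))) η) := by
  set Tc := LinearMap.toContinuousLinearMap T
  have hdiff : ∀ {f : (L →L[ℝ] ℝ) → ℝ} {ξ}, ContDiff ℝ (⊤ : ℕ∞) f → DifferentiableAt ℝ f ξ :=
    fun hf => (hf.differentiable (by simp)).differentiableAt
  constructor
  · intro hhom f g hf hg η
    rw [liePoissonBracket_comp_dualMap hdL hdM brM Tc (hdiff hf) (hdiff hg)]
    exact congrArg η (hhom _ _)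
  · intro hpoisson u v
    refine (SeparatingDual.eq_iff_forall_dual_eq (R := ℝ)).2 fun η => ?_
    have heval : ∀ w : L, ContDiff ℝ (⊤ : ℕ∞) fun ξ : L →L[ℝ] ℝ => ξ w :=
      fun w => (ContinuousLinearMap.apply ℝ ℝ w).contDiff
    have h := hpoisson _ _ (heval u) (heval v) η
    rw [liePoissonBracket_comp_dualMap hdL hdM brM Tc (hdiff (heval u)) (hdiff (heval v)),
      liePoissonBracket, apply_eval hdL, apply_eval hdL] at h
    exact h

/-- A linear map `T : g → h` between finite-dimensional real Lie algebras is a Lie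
algebra homomorphism if and only if its dual map `T* : h* → g*` is a Poisson map for
the Lie–Poisson brackets: for all smooth `f, g : g* → ℝ` and all `η ∈ h*`,
`{f,g}_{g*}(T*(η)) = {f ∘ T*, g ∘ T*}_{h*}(η)`. -/
theorem lieHom_iff_dual_poissonMap {L M : Type*}
    [NormedAddCommGroup L] [NormedSpace ℝ L] [FiniteDimensional ℝ L]
    [NormedAddCommGroup M] [NormedSpace ℝ M] [FiniteDimensional ℝ M]
    -- the Lie algebra structure on `L`:
    (brL : L →ₗ[ℝ] L →ₗ[ℝ] L)
    (hbrL_alt : ∀ u : L, brL u u = 0)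
    (hbrL_jacobi : ∀ u v w : L, brL u (brL v w) + brL w (brL u v) + brL v (brL w u) = 0)
    -- the Lie algebra structure on `M`:
    (brM : M →ₗ[ℝ] M →ₗ[ℝ] M)
    (hbrM_alt : ∀ u : M, brM u u = 0)
    (hbrM_jacobi : ∀ u v w : M, brM u (brM v w) + brM w (brM u v) + brM v (brM w u) = 0)
    -- the identifications of Fréchet derivatives with Lie algebra elements via the
    -- canonical isomorphisms `g ≅ (g*)*` and `h ≅ (h*)*`:
    (dL : ((L →L[ℝ] ℝ) → ℝ) → (L →L[ℝ] ℝ) → L)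
    (hdL : ∀ (f : (L →L[ℝ] ℝ) → ℝ) (ξ α : L →L[ℝ] ℝ), α (dL f ξ) = fderiv ℝ f ξ α)
    (dM : ((M →L[ℝ] ℝ) → ℝ) → (M →L[ℝ] ℝ) → M)
    (hdM : ∀ (f : (M →L[ℝ] ℝ) → ℝ) (η α : M →L[ℝ] ℝ), α (dM f η) = fderiv ℝ f η α)
    -- a linear map `T : L → M`:
    (T : L →ₗ[ℝ] M) :
    (∀ u v : L, T (brL u v) = brM (T u) (T v))
      ↔ (∀ f g : (L →L[ℝ] ℝ) → ℝ, ContDiff ℝ (⊤ : ℕ∞) f → ContDiff ℝ (⊤ : ℕ∞) g →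
          ∀ η : M →L[ℝ] ℝ,
            liePoissonBracket brL dL f g (η.comp (LinearMap.toContinuousLinearMap T))
              = liePoissonBracket brM dM
                  (fun ζ => f (ζ.comp (LinearMap.toContinuousLinearMap T)))
                  (fun ζ => g (ζ.comp (LinearMap.toContinuousLinearMap T))) η) :=
  lieHom_iff_dual_poissonMap_general brL brM dL hdL dM hdM T
end

section
/- Let V be a finite-dimensional real vector space, R ⊆ V a subspace, and Ω a nondegenerate alternating bilinear form on R (if v ∈ R satisfies Ω(v,w) = 0 for all w ∈ R, then v = 0). Then there exists a unique alternating bilinear form π on V* (a bivector on V), with induced map π♯ : V* → V determined by β(π♯(α)) = π(α,β), such that π♯(V*) = R and Ω(π♯(α), π♯(β)) = π(β, α) for all α, β ∈ V*. -/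
/-!
A nondegenerate form `Ω` on a finite-dimensional `R` identifies `R` with `R*`, so every
`α ∈ V*` has a unique `π♯ α ∈ R` with `Ω (π♯ α, ·) = α|_R`; then `π (α, β) := β (π♯ α)` works,
and it is alternating because `Ω` is. Conversely, if `π♯` has range `R` and satisfies the
compatibility condition, then `Ω (π♯ α, ·)` and `α` agree on `R = π♯(V*)`, which pins down `π♯`,
hence `π`.
-/

namespace LinearMap.BilinForm

variable {K V : Type*} [Field K] [AddCommGroup V] [Module K V] {R : Submodule K V}
  [FiniteDimensional K R] {Ω : LinearMap.BilinForm K R}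

noncomputable def sharp (hΩ : Ω.Nondegenerate) : Module.Dual K V →ₗ[K] R :=
  (Ω.toDual hΩ).symm ∘ₗ R.dualRestrict

variable (hΩ : Ω.Nondegenerate)

@[simp]
theorem apply_sharp (α : Module.Dual K V) (w : R) : Ω (sharp hΩ α) w = α w := by
  simp [sharp]

theorem eq_sharp_of_forall_apply {α : Module.Dual K V} {v : R} (h : ∀ w, Ω v w = α w) :
    v = sharp hΩ α :=
  (Ω.toDual hΩ).injective <| LinearMap.ext fun w => by simp [toDual_def, h]

theorem sharp_surjective : Function.Surjective (sharp hΩ) :=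
  (Ω.toDual hΩ).symm.surjective.comp (Subspace.dualRestrict_surjective (W := R))

theorem range_subtype_comp_sharp : LinearMap.range (R.subtype ∘ₗ sharp hΩ) = R := by
  rw [LinearMap.range_comp, LinearMap.range_eq_top.mpr (sharp_surjective hΩ), Submodule.map_top,
    Submodule.range_subtype]

theorem eq_subtype_comp_sharp {s : Module.Dual K V →ₗ[K] V} (hrange : LinearMap.range s = R)
    (hcompat : ∀ (α β : Module.Dual K V) (hα : s α ∈ R) (hβ : s β ∈ R),
      Ω ⟨s α, hα⟩ ⟨s β, hβ⟩ = α (s β)) :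
    s = R.subtype ∘ₗ sharp hΩ := by
  have hmem : ∀ α, s α ∈ R := fun α => hrange ▸ LinearMap.mem_range_self s α
  ext α
  suffices ⟨s α, hmem α⟩ = sharp hΩ α from congrArg Subtype.val this
  refine eq_sharp_of_forall_apply hΩ fun w => ?_
  obtain ⟨β, hβ⟩ : (w : V) ∈ LinearMap.range s := hrange ▸ w.2
  obtain rfl : w = ⟨s β, hmem β⟩ := Subtype.ext hβ.symm
  exact hcompat α β _ _

end LinearMap.BilinForm

/-- Given a subspace `R` of a finite-dimensional real vector space `V` and a
nondegenerate alternating bilinear form `Ω` on `R`, there is a unique bivector `π` on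
`V` (alternating bilinear form on `V*`), with induced map `π♯ : V* → V` determined by
`β(π♯(α)) = π(α,β)`, such that `π♯(V*) = R` and `Ω(π♯(α), π♯(β)) = π(β,α)`. -/
theorem unique_bivector_of_symplectic_subspace {V : Type*} [AddCommGroup V] [Module ℝ V]
    [FiniteDimensional ℝ V]
    (R : Submodule ℝ V)
    (Ω : ↥R →ₗ[ℝ] ↥R →ₗ[ℝ] ℝ)
    (hΩalt : ∀ v : ↥R, Ω v v = 0)
    (hΩnondeg : ∀ v : ↥R, (∀ w : ↥R, Ω v w = 0) → v = 0) :
    ∃! π : Module.Dual ℝ V →ₗ[ℝ] Module.Dual ℝ V →ₗ[ℝ] ℝ,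
      (∀ α : Module.Dual ℝ V, π α α = 0) ∧
      ∃ sharp : Module.Dual ℝ V →ₗ[ℝ] V,
        (∀ α β : Module.Dual ℝ V, β (sharp α) = π α β) ∧
        LinearMap.range sharp = R ∧
        ∀ (α β : Module.Dual ℝ V) (hα : sharp α ∈ R) (hβ : sharp β ∈ R),
          Ω ⟨sharp α, hα⟩ ⟨sharp β, hβ⟩ = π β α := by
  have hΩ : Ω.Nondegenerate :=
    (LinearMap.IsAlt.isRefl hΩalt).nondegenerate_iff_separatingLeft.mpr hΩnondeg
  open LinearMap.BilinForm in
  refine ⟨Module.Dual.eval ℝ V ∘ₗ R.subtype ∘ₗ sharp hΩ,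
    ⟨fun α => (apply_sharp hΩ α _).symm.trans (hΩalt _), R.subtype ∘ₗ sharp hΩ, fun _ _ => rfl,
      range_subtype_comp_sharp hΩ, fun α β _ _ => apply_sharp hΩ α _⟩, ?_⟩
  rintro π ⟨-, s, hπ, hrange, hcompat⟩
  have hs : s = R.subtype ∘ₗ LinearMap.BilinForm.sharp hΩ :=
    LinearMap.BilinForm.eq_subtype_comp_sharp hΩ hrange fun α β hα hβ =>
      (hcompat α β hα hβ).trans (hπ β α).symm
  ext α β
  rw [← hπ, hs]
  rfl
end

section
/- Let V be a finite-dimensional real vector space, π a bivector on V with induced map π♯ : V* → V, characteristic subspace R = π♯(V*), and canonical symplectic form Ω on R determined by Ω(π♯(α), π♯(β)) = π(β,α). For a subspace W ⊆ V set W^π := π♯(Ann(W)). Then W^π = {v ∈ R : Ω(v,w) = 0 for all w ∈ W ∩ R} (the Ω-symplectic orthogonal of W ∩ R inside R), and in particular (W^π)^π = W ∩ R. -/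
/-- For a bivector `π` on a finite-dimensional real vector space `V`, with induced map
`π♯ : V* → V`, characteristic subspace `R = π♯(V*)` and canonical symplectic form `Ω`
on `R` (`Ω(π♯α, π♯β) = π(β,α)`), and a subspace `W ⊆ V`, the subspace
`W^π = π♯(Ann(W))` equals the `Ω`-symplectic orthogonal of `W ∩ R` inside `R`; in
particular `(W^π)^π = W ∩ R`. -/
theorem piOrthogonal_eq_symplecticOrthogonal {V : Type*} [AddCommGroup V] [Module ℝ V]
    [FiniteDimensional ℝ V]
    (π : Module.Dual ℝ V →ₗ[ℝ] Module.Dual ℝ V →ₗ[ℝ] ℝ)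
    (hπ : ∀ α : Module.Dual ℝ V, π α α = 0)
    (sharp : Module.Dual ℝ V →ₗ[ℝ] V)
    (hsharp : ∀ α β : Module.Dual ℝ V, β (sharp α) = π α β)
    (Ω : ↥(LinearMap.range sharp) →ₗ[ℝ] ↥(LinearMap.range sharp) →ₗ[ℝ] ℝ)
    (hΩ : ∀ α β : Module.Dual ℝ V,
      Ω ⟨sharp α, LinearMap.mem_range_self sharp α⟩
        ⟨sharp β, LinearMap.mem_range_self sharp β⟩ = π β α)
    (W : Submodule ℝ V) :
    (∀ v : V,
        v ∈ Submodule.map sharp (Submodule.dualAnnihilator W) ↔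
          ∃ hv : v ∈ LinearMap.range sharp,
            ∀ (w : V) (hwW : w ∈ W) (hwR : w ∈ LinearMap.range sharp),
              Ω ⟨v, hv⟩ ⟨w, hwR⟩ = 0) ∧
      Submodule.map sharp
          (Submodule.dualAnnihilator (Submodule.map sharp (Submodule.dualAnnihilator W)))
        = W ⊓ LinearMap.range sharp := by
  -- skew symmetry
  have hskew : ∀ α β : Module.Dual ℝ V, π α β = -π β α := by
    intro α β
    have h := hπ (α + β)
    simp only [map_add, LinearMap.add_apply, hπ] at h
    linarith
  -- kernel of sharp is annihilator of range sharp
  have hker : ∀ α : Module.Dual ℝ V,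
      α ∈ (LinearMap.range sharp).dualAnnihilator → sharp α = 0 := by
    intro α hα
    rw [Submodule.mem_dualAnnihilator] at hα
    have h : ∀ β : Module.Dual ℝ V, β (sharp α) = 0 := by
      intro β
      rw [hsharp, hskew, ← hsharp]
      simp [hα (sharp β) (LinearMap.mem_range_self sharp β)]
    exact (Module.forall_dual_apply_eq_zero_iff ℝ _).mp h
  have part1 : ∀ v : V,
      v ∈ Submodule.map sharp (Submodule.dualAnnihilator W) ↔
        ∃ hv : v ∈ LinearMap.range sharp,
          ∀ (w : V) (hwW : w ∈ W) (hwR : w ∈ LinearMap.range sharp),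
            Ω ⟨v, hv⟩ ⟨w, hwR⟩ = 0 := by
    intro v
    constructor
    · rintro ⟨α, hα, rfl⟩
      refine ⟨LinearMap.mem_range_self sharp α, ?_⟩
      rintro w hwW ⟨β, rfl⟩
      rw [hΩ, ← hsharp]
      exact (Submodule.mem_dualAnnihilator _).mp hα (sharp β) hwW
    · rintro ⟨⟨α, rfl⟩, h⟩
      -- α ∈ Ann (W ⊓ R)
      have hα : α ∈ (W ⊓ LinearMap.range sharp).dualAnnihilator := by
        rw [Submodule.mem_dualAnnihilator]
        rintro w ⟨hwW, β, rfl⟩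
        have := h (sharp β) hwW (LinearMap.mem_range_self sharp β)
        rw [hΩ] at this
        rw [hsharp]
        exact this
      rw [Subspace.dualAnnihilator_inf_eq, Submodule.mem_sup] at hα
      obtain ⟨α₁, hα₁, α₂, hα₂, rfl⟩ := hα
      refine ⟨α₁, hα₁, ?_⟩
      rw [map_add, hker α₂ hα₂, add_zero]
  refine ⟨part1, ?_⟩
  -- key characterization of Ann(W^π)
  have key : ∀ α : Module.Dual ℝ V,
      α ∈ (Submodule.map sharp (Submodule.dualAnnihilator W)).dualAnnihilator ↔
        sharp α ∈ W := by
    intro α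
    rw [Submodule.mem_dualAnnihilator]
    constructor
    · intro h
      rw [← Subspace.forall_mem_dualAnnihilator_apply_eq_zero_iff W (sharp α)]
      intro φ hφ
      have := h (sharp φ) ⟨φ, hφ, rfl⟩
      rw [hsharp, hskew, ← hsharp] at this
      linarith [this]
    · rintro h w ⟨β, hβ, rfl⟩
      rw [hsharp, hskew, ← hsharp]
      simp [(Submodule.mem_dualAnnihilator _).mp hβ (sharp α) h]
  apply le_antisymm
  · rintro v ⟨α, hα, rfl⟩
    exact ⟨(key α).mp hα, LinearMap.mem_range_self sharp α⟩
  · rintro v ⟨hvW, α, rfl⟩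
    exact ⟨α, (key α).mpr hvW, rfl⟩
end

section
/- Let V be a finite-dimensional real vector space, π a bivector on V with induced map π♯ : V* → V, and W ⊆ V a subspace. Then V is the (internal) direct sum of W and W^π := π♯(Ann(W)) if and only if the restriction of π to Ann(W) is nondegenerate, i.e. for every nonzero α ∈ Ann(W) there exists β ∈ Ann(W) with π(α,β) ≠ 0. (Pointwise criterion for a submanifold to be cosymplectic.) -/
/-!
For `α ∈ Ann(W)`, the values `π α β = β (π♯ α)` vanish for all `β ∈ Ann(W)` exactly when
`π♯ α ∈ W`, since `W` is the common kernel of `Ann(W)`. So nondegeneracy says that `π♯` followed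
by `V → V ⧸ W` is injective on `Ann(W)`; as `dim W + dim Ann(W) = dim V`, this is the same as
`V = W ⊕ π♯(Ann(W))`.
-/

open Module Submodule

section

variable {K E V : Type*} [Field K] [AddCommGroup E] [Module K E] [AddCommGroup V] [Module K V]

theorem Submodule.finrank_map_of_disjoint_ker (f : E →ₗ[K] V) {U : Submodule K E}
    (h : Disjoint U (LinearMap.ker f)) : finrank K (U.map f) = finrank K U := by
  rw [← LinearMap.range_domRestrict]
  exact LinearMap.finrank_range_of_inj (LinearMap.injective_domRestrict_iff.mpr h)

theorem Submodule.isCompl_map_iff_disjoint_comap [FiniteDimensional K V] (f : E →ₗ[K] V)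
    {W : Submodule K V} {U : Submodule K E} [FiniteDimensional K U]
    (hdim : finrank K W + finrank K U = finrank K V) :
    IsCompl W (U.map f) ↔ Disjoint U (W.comap f) := by
  constructor
  · intro h
    have hker : Disjoint U (LinearMap.ker f) := by
      refine disjoint_ker_of_finrank_le f ?_
      have := finrank_add_eq_of_isCompl h
      omega
    rw [disjoint_def] at hker ⊢
    intro x hxU hxW
    have hfx : f x ∈ W ⊓ U.map f := ⟨hxW, mem_map_of_mem hxU⟩
    rw [h.inf_eq_bot, mem_bot] at hfx
    exact hker x hxU hfx
  · intro h
    have hker : Disjoint U (LinearMap.ker f) := h.mono_right (LinearMap.ker_le_comap f)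
    refine (isCompl_iff_disjoint _ _ ?_).mpr ?_
    · rw [finrank_map_of_disjoint_ker f hker]
      omega
    · rw [disjoint_def]
      rintro _ hxW ⟨x, hxU, rfl⟩
      rw [disjoint_def.mp h x hxU hxW, map_zero]

end

theorem isCompl_piOrthogonal_iff_nondeg_on_annihilator_general {V : Type*} [AddCommGroup V]
    [Module ℝ V] [FiniteDimensional ℝ V]
    (π : Module.Dual ℝ V →ₗ[ℝ] Module.Dual ℝ V →ₗ[ℝ] ℝ)
    (sharp : Module.Dual ℝ V →ₗ[ℝ] V)
    (hsharp : ∀ α β : Module.Dual ℝ V, β (sharp α) = π α β)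
    (W : Submodule ℝ V) :
    IsCompl W (Submodule.map sharp (Submodule.dualAnnihilator W)) ↔
      ∀ α ∈ Submodule.dualAnnihilator W, α ≠ 0 →
        ∃ β ∈ Submodule.dualAnnihilator W, π α β ≠ 0 := by
  rw [isCompl_map_iff_disjoint_comap sharp (Subspace.finrank_add_finrank_dualAnnihilator_eq W),
    disjoint_def]
  refine forall₂_congr fun α _ => ?_
  rw [mem_comap, ← Subspace.forall_mem_dualAnnihilator_apply_eq_zero_iff]
  simp only [hsharp, ne_eq, not_imp_comm (a := α = 0), not_exists, not_and, not_not]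

/-- Pointwise criterion for a submanifold to be cosymplectic: for a bivector `π` on a
finite-dimensional real vector space `V` with induced map `π♯ : V* → V` and a
subspace `W ⊆ V`, the space `V` is the internal direct sum of `W` and
`W^π = π♯(Ann(W))` if and only if the restriction of `π` to `Ann(W)` is
nondegenerate. -/
theorem isCompl_piOrthogonal_iff_nondeg_on_annihilator {V : Type*} [AddCommGroup V]
    [Module ℝ V] [FiniteDimensional ℝ V]
    (π : Module.Dual ℝ V →ₗ[ℝ] Module.Dual ℝ V →ₗ[ℝ] ℝ)
    (hπ : ∀ α : Module.Dual ℝ V, π α α = 0)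
    (sharp : Module.Dual ℝ V →ₗ[ℝ] V)
    (hsharp : ∀ α β : Module.Dual ℝ V, β (sharp α) = π α β)
    (W : Submodule ℝ V) :
    IsCompl W (Submodule.map sharp (Submodule.dualAnnihilator W)) ↔
      ∀ α ∈ Submodule.dualAnnihilator W, α ≠ 0 →
        ∃ β ∈ Submodule.dualAnnihilator W, π α β ≠ 0 :=
  isCompl_piOrthogonal_iff_nondeg_on_annihilator_general π sharp hsharp W
end

section
/- Let V be a finite-dimensional real vector space, π a bivector on V with induced map π♯ : V* → V, characteristic subspace R = π♯(V*), and canonical symplectic form Ω on R determined by Ω(π♯(α), π♯(β)) = π(β,α). For a subspace W ⊆ V with W^π := π♯(Ann(W)): (a) W ∩ W^π = {0} if and only if the restriction of Ω to W ∩ R is nondegenerate (i.e. W ∩ R is a symplectic subspace of (R,Ω)); (b) V = W ⊕ W^π if and only if the restriction of Ω to W ∩ R is nondegenerate and W + R = V. -/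
private lemma finrank_map_eq_of_injOn {M N : Type*} [AddCommGroup M] [Module ℝ M]
    [AddCommGroup N] [Module ℝ N] [FiniteDimensional ℝ M]
    (f : M →ₗ[ℝ] N) (p : Submodule ℝ M) (hp : ∀ x ∈ p, f x = 0 → x = 0) :
    Module.finrank ℝ (p.map f) = Module.finrank ℝ p := by
  have hg : Function.Injective (f ∘ₗ p.subtype) := by
    rw [← LinearMap.ker_eq_bot, eq_bot_iff]
    rintro ⟨x, hx⟩ h0
    exact Submodule.mem_bot _ |>.mpr (Subtype.ext (hp x hx h0))
  have hr : LinearMap.range (f ∘ₗ p.subtype) = p.map f := by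
    rw [LinearMap.range_comp, Submodule.range_subtype]
  rw [← hr]
  exact (LinearEquiv.ofInjective _ hg).finrank_eq.symm

/-- For a bivector `π` on a finite-dimensional real vector space `V` with induced map
`π♯ : V* → V`, characteristic subspace `R = π♯(V*)` and canonical symplectic form `Ω`
on `R` (`Ω(π♯α,π♯β) = π(β,α)`), and a subspace `W ⊆ V` with `W^π = π♯(Ann(W))`:
(a) `W ∩ W^π = {0}` iff the restriction of `Ω` to `W ∩ R` is nondegenerate;
(b) `V = W ⊕ W^π` iff the restriction of `Ω` to `W ∩ R` is nondegenerate and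
`W + R = V`. -/
theorem inf_piOrthogonal_and_isCompl_criteria {V : Type*} [AddCommGroup V] [Module ℝ V]
    [FiniteDimensional ℝ V]
    (π : Module.Dual ℝ V →ₗ[ℝ] Module.Dual ℝ V →ₗ[ℝ] ℝ)
    (hπ : ∀ α : Module.Dual ℝ V, π α α = 0)
    (sharp : Module.Dual ℝ V →ₗ[ℝ] V)
    (hsharp : ∀ α β : Module.Dual ℝ V, β (sharp α) = π α β)
    (Ω : ↥(LinearMap.range sharp) →ₗ[ℝ] ↥(LinearMap.range sharp) →ₗ[ℝ] ℝ)
    (hΩ : ∀ α β : Module.Dual ℝ V,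
      Ω ⟨sharp α, LinearMap.mem_range_self sharp α⟩
        ⟨sharp β, LinearMap.mem_range_self sharp β⟩ = π β α)
    (W : Submodule ℝ V) :
    ((W ⊓ Submodule.map sharp (Submodule.dualAnnihilator W) = ⊥) ↔
        (∀ (v : V) (hvW : v ∈ W) (hvR : v ∈ LinearMap.range sharp),
          (∀ (w : V) (hwW : w ∈ W) (hwR : w ∈ LinearMap.range sharp),
            Ω ⟨v, hvR⟩ ⟨w, hwR⟩ = 0) → v = 0)) ∧
      (IsCompl W (Submodule.map sharp (Submodule.dualAnnihilator W)) ↔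
        ((∀ (v : V) (hvW : v ∈ W) (hvR : v ∈ LinearMap.range sharp),
            (∀ (w : V) (hwW : w ∈ W) (hwR : w ∈ LinearMap.range sharp),
              Ω ⟨v, hvR⟩ ⟨w, hwR⟩ = 0) → v = 0) ∧
          W ⊔ LinearMap.range sharp = ⊤)) := by
  have hanti : ∀ α β, π α β = - π β α := by
    intro α β
    have h := hπ (α + β)
    simp only [map_add, LinearMap.add_apply, hπ] at h
    linarith
  have hker : LinearMap.ker sharp = Submodule.dualAnnihilator (LinearMap.range sharp) := by
    ext α
    simp only [LinearMap.mem_ker, Submodule.mem_dualAnnihilator]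
    constructor
    · rintro h w ⟨β, rfl⟩
      rw [hsharp β α, hanti, ← hsharp α β, h, map_zero, neg_zero]
    · intro h
      rw [← Module.forall_dual_apply_eq_zero_iff ℝ (sharp α)]
      intro φ
      rw [hsharp α φ, hanti, ← hsharp φ α, h (sharp φ) ⟨φ, rfl⟩, neg_zero]
  -- part (a)
  have ha : (W ⊓ Submodule.map sharp (Submodule.dualAnnihilator W) = ⊥) ↔
      (∀ (v : V) (_ : v ∈ W) (hvR : v ∈ LinearMap.range sharp),
        (∀ (w : V) (_ : w ∈ W) (hwR : w ∈ LinearMap.range sharp),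
          Ω ⟨v, hvR⟩ ⟨w, hwR⟩ = 0) → v = 0) := by
    constructor
    · intro hbot v hvW hvR hv
      obtain ⟨α, hα⟩ := hvR
      have hαAnn : α ∈ (W ⊓ LinearMap.range sharp).dualAnnihilator := by
        rw [Submodule.mem_dualAnnihilator]
        rintro w ⟨hwW, β, hβ⟩
        have := hv w hwW ⟨β, hβ⟩
        subst hβ; subst hα
        rw [hΩ, ← hsharp β α] at this
        exact this
      rw [Subspace.dualAnnihilator_inf_eq] at hαAnn
      obtain ⟨α₁, hα₁, α₂, hα₂, rfl⟩ := Submodule.mem_sup.mp hαAnn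
      have h2 : sharp α₂ = 0 := by rw [← LinearMap.mem_ker, hker]; exact hα₂
      have hmem : v ∈ W ⊓ Submodule.map sharp (Submodule.dualAnnihilator W) := by
        refine ⟨hvW, α₁, hα₁, ?_⟩
        rw [← hα, map_add, h2, add_zero]
      rw [hbot] at hmem
      exact hmem
    · intro hnd
      rw [eq_bot_iff]
      rintro v ⟨hvW, α, hαW, hα⟩
      refine hnd v hvW ⟨α, hα⟩ ?_
      rintro w hwW ⟨β, hβ⟩
      subst hβ; subst hα
      rw [hΩ, ← hsharp β α]
      have hαW' : α ∈ W.dualAnnihilator := hαW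
      rw [Submodule.mem_dualAnnihilator] at hαW'
      exact hαW' _ hwW
  refine ⟨ha, ?_⟩
  constructor
  · intro h
    refine ⟨ha.mp (disjoint_iff.mp h.disjoint), ?_⟩
    have h1 : W ⊔ Submodule.map sharp (Submodule.dualAnnihilator W) = ⊤ :=
      codisjoint_iff.mp h.codisjoint
    have h2 : Submodule.map sharp (Submodule.dualAnnihilator W) ≤ LinearMap.range sharp :=
      LinearMap.map_le_range
    exact top_le_iff.mp (h1 ▸ sup_le_sup_left h2 W)
  · rintro ⟨hnd, hsup⟩
    have hdisj := ha.mpr hnd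
    refine ⟨disjoint_iff.mpr hdisj, codisjoint_iff.mpr ?_⟩
    -- dimension count
    have hdim1 : Module.finrank ℝ (Submodule.map sharp (Submodule.dualAnnihilator W)) =
        Module.finrank ℝ W.dualAnnihilator := by
      refine finrank_map_eq_of_injOn sharp _ ?_
      intro α hαW h0
      rw [← LinearMap.mem_ker, hker] at h0
      have : α ∈ (W ⊔ LinearMap.range sharp).dualAnnihilator := by
        rw [Submodule.dualAnnihilator_sup_eq]
        exact ⟨hαW, h0⟩
      rw [hsup, Submodule.dualAnnihilator_top, Submodule.mem_bot] at this
      exact this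
    have hdim2 := Submodule.finrank_quotient_add_finrank W
    have hequiv : Module.finrank ℝ (V ⧸ W) = Module.finrank ℝ W.dualAnnihilator :=
      LinearEquiv.finrank_eq (Subspace.quotEquivAnnihilator W)
    apply Submodule.eq_top_of_disjoint _ _ _ (disjoint_iff.mpr hdisj)
    rw [hdim1, ← hequiv]
    omega
end

section
/- Let U and V be finite-dimensional real vector spaces, φ : U → V a linear map with dual map φ* : V* → U*, and L ⊆ V ⊕ V* a lagrangian subspace (with respect to the pairing ⟨(X,α),(Y,β)⟩ = β(X) + α(Y)). Then the backward image φ^!L := {(u, φ*(β)) : u ∈ U, β ∈ V*, (φ(u), β) ∈ L} is a lagrangian subspace of U ⊕ U*, and its projection to U equals φ⁻¹(pr_V(L)), where pr_V(L) ⊆ V is the projection of L to V. -/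
/-- The canonical symmetric pairing on the generalized tangent space `W ⊕ W*`:
`⟨(X,α),(Y,β)⟩ = β(X) + α(Y)`. -/
def gpair {W : Type*} [AddCommGroup W] [Module ℝ W]
    (e e' : W × Module.Dual ℝ W) : ℝ :=
  e'.2 e.1 + e.2 e'.1

/-- A subset of `W ⊕ W*` is lagrangian if it equals its own orthogonal complement
with respect to the canonical symmetric pairing. -/
def IsLagrangian {W : Type*} [AddCommGroup W] [Module ℝ W]
    (S : Set (W × Module.Dual ℝ W)) : Prop :=
  ∀ e : W × Module.Dual ℝ W, e ∈ S ↔ ∀ e' ∈ S, gpair e e' = 0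

/-- The backward image `φ^!L = {(u, φ*(β)) : (φ(u), β) ∈ L}` of a lagrangian subspace
`L ⊆ V ⊕ V*` under a linear map `φ : U → V`. -/
def backwardImage {U V : Type*} [AddCommGroup U] [Module ℝ U] [AddCommGroup V]
    [Module ℝ V] (φ : U →ₗ[ℝ] V) (L : Set (V × Module.Dual ℝ V)) :
    Set (U × Module.Dual ℝ U) :=
  {e | ∃ (u : U) (β : Module.Dual ℝ V), (φ u, β) ∈ L ∧ e = (u, φ.dualMap β)}

lemma dualAnnihilator_comap_aux {K M N : Type*} [Field K] [AddCommGroup M] [Module K M]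
    [AddCommGroup N] [Module K N] (f : M →ₗ[K] N) (W : Submodule K N) :
    (W.comap f).dualAnnihilator = W.dualAnnihilator.map f.dualMap := by
  have h1 : W.comap f = LinearMap.ker (W.mkQ ∘ₗ f) := by
    ext x
    simp [LinearMap.mem_ker, Submodule.Quotient.mk_eq_zero]
  rw [h1, ← LinearMap.range_dualMap_eq_dualAnnihilator_ker,
    ← LinearMap.dualMap_comp_dualMap, LinearMap.range_comp,
    Submodule.range_dualMap_mkQ_eq]

lemma gpair_add_left {W : Type*} [AddCommGroup W] [Module ℝ W]
    (a b e' : W × Module.Dual ℝ W) : gpair (a + b) e' = gpair a e' + gpair b e' := by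
  simp [gpair]; ring

lemma gpair_smul_left {W : Type*} [AddCommGroup W] [Module ℝ W]
    (c : ℝ) (a e' : W × Module.Dual ℝ W) : gpair (c • a) e' = c * gpair a e' := by
  simp [gpair]; ring

/-- A lagrangian subset is a submodule. -/
def lagSub {W : Type*} [AddCommGroup W] [Module ℝ W]
    {L : Set (W × Module.Dual ℝ W)} (hL : IsLagrangian L) :
    Submodule ℝ (W × Module.Dual ℝ W) where
  carrier := L
  zero_mem' := by
    rw [hL]
    intro e' _
    simp [gpair]
  add_mem' := fun {a b} ha hb => by
    rw [hL] at ha hb ⊢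
    intro e' he'
    rw [gpair_add_left, ha e' he', hb e' he', add_zero]
  smul_mem' := fun c a ha => by
    rw [hL] at ha ⊢
    intro e' he'
    rw [gpair_smul_left, ha e' he', mul_zero]

/-- The backward image of a lagrangian subspace `L ⊆ V ⊕ V*` under a linear map
`φ : U → V` is a lagrangian subspace of `U ⊕ U*`, and its projection to `U` equals
`φ⁻¹(pr_V(L))`. -/
theorem backwardImage_lagrangian {U V : Type*}
    [AddCommGroup U] [Module ℝ U] [FiniteDimensional ℝ U]
    [AddCommGroup V] [Module ℝ V] [FiniteDimensional ℝ V]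
    (φ : U →ₗ[ℝ] V) (L : Set (V × Module.Dual ℝ V)) (hL : IsLagrangian L) :
    IsLagrangian (backwardImage φ L) ∧
      Prod.fst '' backwardImage φ L = φ ⁻¹' (Prod.fst '' L) := by
  constructor
  · intro e
    constructor
    · rintro ⟨u, β, hβ, rfl⟩ e' ⟨u', β', hβ', rfl⟩
      have h := (hL (φ u, β)).mp hβ (φ u', β') hβ'
      simpa [gpair, LinearMap.dualMap_apply] using h
    · obtain ⟨u, α⟩ := e
      intro h
      set Φ : (U × (Module.Dual ℝ V)) →ₗ[ℝ] (V × (Module.Dual ℝ V)) := φ.prodMap LinearMap.id with hΦdef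
      set Ls : Submodule ℝ (V × (Module.Dual ℝ V)) := lagSub hL with hLs
      set f : Module.Dual ℝ (U × (Module.Dual ℝ V)) :=
        (Module.Dual.eval ℝ V (φ u)).comp (LinearMap.snd ℝ U (Module.Dual ℝ V)) +
          α.comp (LinearMap.fst ℝ U (Module.Dual ℝ V)) with hf
      have hfmem : f ∈ (Ls.comap Φ).dualAnnihilator := by
        rw [Submodule.mem_dualAnnihilator]
        rintro ⟨u', β'⟩ hx
        have hx' : (φ u', β') ∈ L := Submodule.mem_comap.mp hx
        have hb : (u', φ.dualMap β') ∈ backwardImage φ L := ⟨u', β', hx', rfl⟩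
        have := h _ hb
        simp only [gpair, LinearMap.dualMap_apply] at this
        simpa [hf, Module.Dual.eval_apply, add_comm] using this
      rw [dualAnnihilator_comap_aux] at hfmem
      obtain ⟨g, hg, hgf⟩ := hfmem
      set γ : (Module.Dual ℝ V) := g.comp (LinearMap.inl ℝ V (Module.Dual ℝ V)) with hγ
      set y : V := (Module.evalEquiv ℝ V).symm (g.comp (LinearMap.inr ℝ V (Module.Dual ℝ V))) with hy
      have hyξ : ∀ ξ : (Module.Dual ℝ V), ξ y = g (0, ξ) := by
        intro ξ
        rw [hy, Module.apply_evalEquiv_symm_apply]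
        rfl
      have hyγ : (y, γ) ∈ L := by
        rw [hL]
        intro e' he'
        have hg' : g e' = 0 := (Submodule.mem_dualAnnihilator g).mp hg e' he'
        obtain ⟨v, ξ⟩ := e'
        have : g (v, ξ) = g (v, 0) + g (0, ξ) := by
          rw [← map_add]; norm_num
        simp only [gpair, hyξ, hγ, LinearMap.comp_apply, LinearMap.inl_apply]
        rw [add_comm, ← this, hg']
      have hyu : y = φ u := by
        have key : ∀ ξ : (Module.Dual ℝ V), ξ (y - φ u) = 0 := by
          intro ξ
          have h1 : Φ.dualMap g (0, ξ) = f (0, ξ) := by rw [hgf]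
          simp only [LinearMap.dualMap_apply, hΦdef, LinearMap.prodMap_apply,
            LinearMap.id_apply, map_zero, hf, LinearMap.add_apply, LinearMap.comp_apply,
            LinearMap.snd_apply, LinearMap.fst_apply, Module.Dual.eval_apply] at h1
          rw [map_sub, hyξ, h1]
          simp
        have := (Module.forall_dual_apply_eq_zero_iff ℝ (y - φ u)).mp key
        exact sub_eq_zero.mp this
      have hαγ : α = φ.dualMap γ := by
        ext u'
        have h1 : Φ.dualMap g (u', 0) = f (u', 0) := by rw [hgf]
        simp only [LinearMap.dualMap_apply, hΦdef, LinearMap.prodMap_apply,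
          LinearMap.id_apply, map_zero, hf, LinearMap.add_apply, LinearMap.comp_apply,
          LinearMap.snd_apply, LinearMap.fst_apply, Module.Dual.eval_apply] at h1
        simp only [LinearMap.dualMap_apply, hγ, LinearMap.comp_apply, LinearMap.inl_apply]
        rw [h1, zero_add]
      exact ⟨u, γ, by rwa [hyu] at hyγ, by rw [hαγ]⟩
  · ext u'
    constructor
    · rintro ⟨⟨a, b⟩, ⟨m, β, hβ, heq⟩, rfl⟩
      rw [Prod.ext_iff] at heq
      simp only [Set.mem_preimage]
      exact ⟨(φ m, β), hβ, congrArg φ heq.1.symm⟩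
    · rintro hu
      obtain ⟨⟨v, β⟩, hvβ, hv⟩ := hu
      refine ⟨(u', φ.dualMap β), ⟨u', β, ?_, rfl⟩, rfl⟩
      simp only at hv
      rwa [← hv]
end

section
/- Let V be a finite-dimensional real vector space, π a bivector on V with induced skew map π♯ : V* → V, and B an alternating bilinear form on V with induced map B♭ : V → V*. Suppose the linear map C := Id_{V*} + B♭ ∘ π♯ : V* → V* is invertible. Then the gauge-transformed map π_B♯ := π♯ ∘ C⁻¹ : V* → V is again skew-symmetric (β(π_B♯(α)) = −α(π_B♯(β)) for all α, β ∈ V*), and its range equals the range of π♯: π_B♯(V*) = π♯(V*). -/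
/-- Gauge transformation of a bivector: for a bivector `π` on a finite-dimensional
real vector space `V` with induced skew map `π♯ : V* → V`, and an alternating
bilinear form `B` on `V` with induced map `B♭ : V → V*` (given in curried form), if
`C = Id + B♭ ∘ π♯ : V* → V*` is invertible (with inverse `Cinv`), then
`π_B♯ = π♯ ∘ C⁻¹` is again skew-symmetric and has the same range as `π♯`. -/
theorem gauge_transform_skew_and_range {V : Type*} [AddCommGroup V] [Module ℝ V]
    [FiniteDimensional ℝ V]
    (π : Module.Dual ℝ V →ₗ[ℝ] Module.Dual ℝ V →ₗ[ℝ] ℝ)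
    (hπ : ∀ α : Module.Dual ℝ V, π α α = 0)
    (p : Module.Dual ℝ V →ₗ[ℝ] V)
    (hp : ∀ α β : Module.Dual ℝ V, β (p α) = π α β)
    (B : V →ₗ[ℝ] Module.Dual ℝ V)
    (hB : ∀ X : V, B X X = 0)
    (Cinv : Module.Dual ℝ V →ₗ[ℝ] Module.Dual ℝ V)
    (hCinv₁ : (LinearMap.id + B.comp p).comp Cinv = LinearMap.id)
    (hCinv₂ : Cinv.comp (LinearMap.id + B.comp p) = LinearMap.id) :
    (∀ α β : Module.Dual ℝ V, β ((p.comp Cinv) α) = -(α ((p.comp Cinv) β))) ∧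
      LinearMap.range (p.comp Cinv) = LinearMap.range p := by
  -- skewness of π
  have hπskew : ∀ α β : Module.Dual ℝ V, π α β = -π β α := by
    intro α β
    have h := hπ (α + β)
    simp only [map_add, LinearMap.add_apply, hπ α, hπ β] at h
    linarith
  have hBskew : ∀ X Y : V, B X Y = -B Y X := by
    intro X Y
    have h := hB (X + Y)
    simp only [map_add, LinearMap.add_apply, hB X, hB Y] at h
    linarith
  constructor
  · intro α β
    have hα : α = Cinv α + B (p (Cinv α)) := by
      have := congrArg (fun f => f α) hCinv₁
      simpa [LinearMap.comp_apply, LinearMap.add_apply] using this.symm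
    have hβ : β = Cinv β + B (p (Cinv β)) := by
      have := congrArg (fun f => f β) hCinv₁
      simpa [LinearMap.comp_apply, LinearMap.add_apply] using this.symm
    simp only [LinearMap.comp_apply]
    conv_lhs => rw [hβ]
    conv_rhs => rw [hα]
    simp only [LinearMap.add_apply]
    have h1 : Cinv β (p (Cinv α)) = -(Cinv α (p (Cinv β))) := by
      rw [hp, hp, hπskew]
    have h2 : B (p (Cinv β)) (p (Cinv α)) = -(B (p (Cinv α)) (p (Cinv β))) := by
      rw [hBskew]
    linarith
  · have hsurj : Function.Surjective Cinv := by
      intro x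
      refine ⟨((LinearMap.id : Module.Dual ℝ V →ₗ[ℝ] Module.Dual ℝ V) + B.comp p) x, ?_⟩
      simpa using congrArg (fun f => f x) hCinv₂
    rw [LinearMap.range_comp, LinearMap.range_eq_top.mpr hsurj, Submodule.map_top]
end

section
/- Let V be a finite-dimensional real vector space, π a bivector on V with induced map π♯ : V* → V, characteristic subspace R = π♯(V*), and canonical symplectic form Ω on R determined by Ω(π♯(α), π♯(β)) = π(β,α). Let B be an alternating bilinear form on V with induced map B♭ : V → V*. Then the linear map Id_{V*} + B♭ ∘ π♯ : V* → V* is invertible if and only if the bilinear form Ω + B|_R on R (where B|_R is the restriction of B to R) is nondegenerate, i.e. for every nonzero v ∈ R there exists w ∈ R with Ω(v,w) + B(v,w) ≠ 0. -/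
/-- For a bivector `π` on a finite-dimensional real vector space `V` with induced map
`π♯ : V* → V`, characteristic subspace `R = π♯(V*)` and canonical symplectic form `Ω`
on `R` (`Ω(π♯α,π♯β) = π(β,α)`), and an alternating bilinear form `B` on `V` with
induced map `B♭ : V → V*` (given in curried form): the map
`Id + B♭ ∘ π♯ : V* → V*` is invertible if and only if the bilinear form `Ω + B|_R`
on `R` is nondegenerate. -/
theorem gauge_invertible_iff_nondeg {V : Type*} [AddCommGroup V] [Module ℝ V]
    [FiniteDimensional ℝ V]
    (π : Module.Dual ℝ V →ₗ[ℝ] Module.Dual ℝ V →ₗ[ℝ] ℝ)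
    (hπ : ∀ α : Module.Dual ℝ V, π α α = 0)
    (p : Module.Dual ℝ V →ₗ[ℝ] V)
    (hp : ∀ α β : Module.Dual ℝ V, β (p α) = π α β)
    (Ω : ↥(LinearMap.range p) →ₗ[ℝ] ↥(LinearMap.range p) →ₗ[ℝ] ℝ)
    (hΩ : ∀ α β : Module.Dual ℝ V,
      Ω ⟨p α, LinearMap.mem_range_self p α⟩ ⟨p β, LinearMap.mem_range_self p β⟩ = π β α)
    (B : V →ₗ[ℝ] Module.Dual ℝ V)
    (hB : ∀ X : V, B X X = 0) :
    Function.Bijective ((LinearMap.id : Module.Dual ℝ V →ₗ[ℝ] Module.Dual ℝ V) + B.comp p) ↔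
      ∀ (v : V) (hv : v ∈ LinearMap.range p), v ≠ 0 →
        ∃ (w : V) (hw : w ∈ LinearMap.range p), Ω ⟨v, hv⟩ ⟨w, hw⟩ + B v w ≠ 0 := by
  set T := (LinearMap.id : Module.Dual ℝ V →ₗ[ℝ] Module.Dual ℝ V) + B.comp p with hT
  have hTapp : ∀ α, T α = α + B (p α) := by
    intro α; simp [hT]
  have skewπ : ∀ α β, π α β = - π β α := by
    intro α β
    have h := hπ (α + β)
    simp only [map_add, LinearMap.add_apply, hπ α, hπ β] at h
    linarith
  have bij_iff_inj : Function.Bijective T ↔ Function.Injective T := by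
    constructor
    · exact fun h => h.1
    · intro h; exact ⟨h, (LinearMap.injective_iff_surjective).mp h⟩
  rw [bij_iff_inj]
  constructor
  · intro hinj v hv hvne
    by_contra hcon
    push_neg at hcon
    obtain ⟨α₀, hα₀⟩ := hv
    set γ := B v with hγ
    have key : ∀ β : Module.Dual ℝ V, β v = γ (p β) := by
      intro β
      have h := hcon (p β) (LinearMap.mem_range_self p β)
      have hΩ' : Ω ⟨v, ⟨α₀, hα₀⟩⟩ ⟨p β, LinearMap.mem_range_self p β⟩ = π β α₀ := by
        have : (⟨v, ⟨α₀, hα₀⟩⟩ : ↥(LinearMap.range p)) =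
            ⟨p α₀, LinearMap.mem_range_self p α₀⟩ := Subtype.ext hα₀.symm
        rw [this, hΩ]
      rw [hΩ'] at h
      have hbv : β v = π α₀ β := by rw [← hα₀]; exact hp α₀ β
      have := skewπ β α₀
      rw [hbv]
      linarith
    have hvpγ : v + p γ = 0 := by
      rw [← Module.forall_dual_apply_eq_zero_iff ℝ (v + p γ)]
      intro β
      have h1 : β (p γ) = π γ β := hp γ β
      have h2 : γ (p β) = π β γ := hp β γ
      have h3 := skewπ γ β
      have h4 := key β
      simp only [map_add]
      rw [h1, h4, h2, h3]; ring
    have hγne : γ ≠ 0 := by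
      intro h0
      apply hvne
      have : p γ = 0 := by rw [h0, map_zero]
      rw [this, add_zero] at hvpγ
      exact hvpγ
    have hTγ : T γ = 0 := by
      rw [hTapp]
      have hpγ : p γ = -v := (neg_eq_of_add_eq_zero_right hvpγ).symm
      rw [hpγ, map_neg, ← hγ]
      abel
    exact hγne (hinj (by rw [hTγ, map_zero]))
  · intro hnd
    rw [← LinearMap.ker_eq_bot]
    rw [LinearMap.ker_eq_bot']
    intro α hα
    rw [hTapp] at hα
    have hαeq : B (p α) = -α := (neg_eq_of_add_eq_zero_right hα).symm
    have hzero : ∀ (w : V) (hw : w ∈ LinearMap.range p),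
        Ω ⟨p α, LinearMap.mem_range_self p α⟩ ⟨w, hw⟩ + B (p α) w = 0 := by
      intro w hw
      obtain ⟨β, hβ⟩ := id hw
      have hsub : (⟨w, hw⟩ : ↥(LinearMap.range p)) =
          ⟨p β, LinearMap.mem_range_self p β⟩ := Subtype.ext hβ.symm
      rw [hsub, hΩ, hαeq, ← hβ]
      have : α (p β) = π β α := hp β α
      simp only [LinearMap.neg_apply]
      rw [this]; ring
    have hv0 : p α = 0 := by
      by_contra hne
      obtain ⟨w, hw, hwn⟩ := hnd (p α) (LinearMap.mem_range_self p α) hne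
      exact hwn (hzero w hw)
    rw [hv0, map_zero, add_zero] at hα
    exact hα
end
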